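/- For the symmetrized multi-marginal problem over a finite/compact group $G$ acting isometrically, the multi-marginal value equals the barycentric value: $\bar d_Q^{\mathbf{t}}(\bar a_1,\ldots,\bar a_Q)^p = \inf_{\bar a \in \mathcal{A}_{\mathrm{sym}}} \sum_{q=1}^Q t_q\, \bar d(\bar a, \bar a_q)^p$, where $\bar d(\bar a, \bar a_q) = \inf_{g\in G} d(a, g\cdot a_q)$ and $d = W_p^c$, provided the set of atoms $\mathcal{A}$ is stable under Wasserstein barycenters and the multi-marginal problem on $\mathcal{A}$ is equivalent to the barycentric problem on $\mathcal{A}$. -/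

import Mathlib

/-! By the multi-marginal/barycenter equivalence on `𝒜`, which contains the moved atoms
`g_q • a_q`, each multi-marginal value is an infimum over barycenters `ā ∈ 𝒜`. After exchanging
that infimum with the one over `g : Fin Q → G`, each term `t_q W(ā, g_q • a_q)` involves only its
own `g_q`, so the infimum of the sum is the sum of the infima. -/

open MeasureTheory ENNReal Finset

/-- `γ` is a transport plan between `μ` and `ν`. -/
def IsCoupling {Ω : Type*} [MeasurableSpace Ω] (γ : Measure (Ω × Ω))
    (μ ν : Measure Ω) : Prop :=
  γ.map Prod.fst = μ ∧ γ.map Prod.snd = ν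

/-- The `p`-th power of the `p`-Wasserstein distance associated to the cost `c`. -/
noncomputable def WppC {Ω : Type*} [MeasurableSpace Ω] (c : Ω → Ω → ℝ≥0∞) (p : ℝ)
    (μ ν : Measure Ω) : ℝ≥0∞ :=
  ⨅ (γ : Measure (Ω × Ω)) (_ : IsCoupling γ μ ν), ∫⁻ z, c z.1 z.2 ^ p ∂γ

/-- The multi-marginal optimal transport value with cost
`s(x₁,…,x_Q) = ½ ∑_{q,q'} t_q t_{q'} c(x_q,x_{q'})^p`. -/
noncomputable def MMval {Ω : Type*} [MeasurableSpace Ω] (c : Ω → Ω → ℝ≥0∞) (p : ℝ)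
    {Q : ℕ} (t : Fin Q → ℝ) (b : Fin Q → Measure Ω) : ℝ≥0∞ :=
  ⨅ (γ : Measure (Fin Q → Ω)) (_ : ∀ q, γ.map (fun x => x q) = b q),
    ∫⁻ x, (2 : ℝ≥0∞)⁻¹ * ∑ q, ∑ q',
      ENNReal.ofReal (t q * t q') * c (x q) (x q') ^ p ∂γ

theorem ENNReal.iInf_pi_sum {ι : Type*} {κ : ι → Type*} [∀ i, Nonempty (κ i)] (s : Finset ι)
    (f : ∀ i, κ i → ℝ≥0∞) :
    ⨅ g : ∀ i, κ i, ∑ i ∈ s, f i (g i) = ∑ i ∈ s, ⨅ x, f i x := by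
  classical
  rw [ENNReal.iInf_sum fun _ g g' => ?_]
  · exact Finset.sum_congr rfl fun i _ => (Function.surjective_eval i).iInf_comp (f i)
  refine ⟨fun i => if f i (g i) ≤ f i (g' i) then g i else g' i, fun i _ => ?_⟩
  dsimp only
  split_ifs with h
  · exact ⟨le_rfl, h⟩
  · exact ⟨(not_le.1 h).le, le_rfl⟩

theorem stmt_15_general {Ω : Type*} [MeasurableSpace Ω]
    {G : Type*} [Group G] [MulAction G Ω]
    (c : Ω → Ω → ℝ≥0∞) (p : ℝ)
    (𝒜 : Set (Measure Ω))
    (h𝒜_stable : ∀ (g : G), ∀ a ∈ 𝒜, a.map (fun x => g • x) ∈ 𝒜)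
    {Q : ℕ} (t : Fin Q → ℝ)
    (hequiv : ∀ b : Fin Q → Measure Ω, (∀ q, b q ∈ 𝒜) →
      MMval c p t b = ⨅ a ∈ 𝒜, ∑ q, ENNReal.ofReal (t q) * WppC c p a (b q))
    (a : Fin Q → Measure Ω) (ha : ∀ q, a q ∈ 𝒜) :
    (⨅ g : Fin Q → G, MMval c p t (fun q => (a q).map (fun x => g q • x)))
      = ⨅ abar ∈ 𝒜, ∑ q, ENNReal.ofReal (t q) *
          ⨅ g : G, WppC c p abar ((a q).map (fun x => g • x)) := by
  have hbary : ∀ g : Fin Q → G, MMval c p t (fun q => (a q).map (fun x => g q • x)) =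
      ⨅ abar ∈ 𝒜, ∑ q, ENNReal.ofReal (t q) * WppC c p abar ((a q).map (fun x => g q • x)) :=
    fun g => hequiv _ fun q => h𝒜_stable _ _ (ha q)
  simp_rw [hbary]
  rw [iInf_comm]
  refine iInf_congr fun abar => ?_
  rw [iInf_comm]
  refine iInf_congr fun _ => ?_
  rw [ENNReal.iInf_pi_sum univ
    fun q (g : G) => ENNReal.ofReal (t q) * WppC c p abar ((a q).map (fun x => g • x))]
  exact Finset.sum_congr rfl fun q _ => (ENNReal.mul_iInf (by simp)).symm

/-- For a group `G` acting measurably on `Ω` with the Wasserstein distance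
`G`-invariant, a set of atoms `𝒜` stable under the action and under Wasserstein
barycenters (expressed by the equivalence between the multi-marginal and barycentric
problems on `𝒜`), the symmetrized multi-marginal value equals the symmetrized
barycentric value:
`d̄_Q^t(ā₁,…,ā_Q)^p = inf_{ā ∈ 𝒜_sym} ∑_q t_q d̄(ā, ā_q)^p`. -/
theorem stmt_15 {Ω : Type*} [MeasurableSpace Ω]
    {G : Type*} [Group G] [MulAction G Ω]
    (hmeas : ∀ g : G, Measurable (fun x : Ω => g • x))
    (c : Ω → Ω → ℝ≥0∞) (hc_meas : Measurable (Function.uncurry c)) (p : ℝ) (hp : 1 < p)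
    (𝒜 : Set (Measure Ω)) (h𝒜_prob : ∀ a ∈ 𝒜, IsProbabilityMeasure a)
    (h𝒜_stable : ∀ (g : G), ∀ a ∈ 𝒜, a.map (fun x => g • x) ∈ 𝒜)
    (hWinv : ∀ (g : G) (a b : Measure Ω), a ∈ 𝒜 → b ∈ 𝒜 →
      WppC c p (a.map (fun x => g • x)) (b.map (fun x => g • x)) = WppC c p a b)
    {Q : ℕ} (t : Fin Q → ℝ) (ht : (∀ q, 0 ≤ t q) ∧ ∑ q, t q = 1)
    (hequiv : ∀ b : Fin Q → Measure Ω, (∀ q, b q ∈ 𝒜) →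
      MMval c p t b = ⨅ a ∈ 𝒜, ∑ q, ENNReal.ofReal (t q) * WppC c p a (b q))
    (a : Fin Q → Measure Ω) (ha : ∀ q, a q ∈ 𝒜) :
    (⨅ g : Fin Q → G, MMval c p t (fun q => (a q).map (fun x => g q • x)))
      = ⨅ abar ∈ 𝒜, ∑ q, ENNReal.ofReal (t q) *
          ⨅ g : G, WppC c p abar ((a q).map (fun x => g • x)) :=
  stmt_15_general c p 𝒜 h𝒜_stable t hequiv a ha
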